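/- For every real θ > 0, every integer k ≥ 1 and every real r > −θ: ∑_{n=k}^{∞} c(n−1,k−1) · θ^k / (θ)_n · Γ(n+θ)/Γ(n+θ+r) = θ^{k−1} · Γ(θ+1) / ( (θ+r)^k · Γ(θ+r) ). Equivalently, writing (x)_r = Γ(x+r)/Γ(x) for real x > 0 with x+r > 0: ∑_{n=k}^{∞} c(n−1,k−1) θ^k/(θ)_n · 1/((n+θ)_r) = θ^{k−1}/((θ+r)^k (θ+1)_{r−1}). -/

import Mathlib

/-!
With `s = θ + r`, the relation `Γ(x + n) = Γ(x) (x)_n` turns the `n`-th summand into the constant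
`θ^k Γ(θ) / (Γ(s) s^k)` times `c(n-1,k-1) s^k / (s)_n`, the law of `M_k` for a GEM(0,s) sample,
so the identity says that this law has total mass one. Its partial sums telescope to
`1 - T_N / (s)_N` with `T_N = ∑_{j<k} c(N,j) s^j`, and `T_N ≤ 2^(k-1) (s/2)_N = o((s)_N)`.
-/

noncomputable section

/-- The unsigned Stirling number of the first kind `c(m,j)`: the coefficient of `x^j` in
`x(x+1)⋯(x+m−1)`. -/
def stirlingFirst (m j : ℕ) : ℕ := (ascPochhammer ℕ m).coeff j

/-- The summand: `c(n−1,k−1) · θ^k/(θ)_n · (n+θ)_r⁻¹`, with `(x)_r = Γ(x+r)/Γ(x)`. -/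
def stirlingTerm (θ r : ℝ) (k n : ℕ) : ℝ :=
  (stirlingFirst (n - 1) (k - 1) : ℝ) * θ ^ k / (ascPochhammer ℝ n).eval θ
    * (Real.Gamma ((n : ℝ) + θ) / Real.Gamma ((n : ℝ) + θ + r))

open Finset Filter Polynomial Topology

section Pochhammer

variable {R : Type*}

theorem ascPochhammer_coeff_nonneg [Semiring R] [PartialOrder R] [IsOrderedRing R] (n j : ℕ) :
    0 ≤ (ascPochhammer R n).coeff j := by
  rw [← ascPochhammer_map (Nat.castRingHom R), coeff_map]
  exact Nat.cast_nonneg _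

theorem ascPochhammer_succ_coeff_zero [Semiring R] (n : ℕ) :
    (ascPochhammer R (n + 1)).coeff 0 = 0 := by
  simp [coeff_zero_eq_eval_zero]

theorem ascPochhammer_succ_coeff_succ [Semiring R] (n j : ℕ) :
    (ascPochhammer R (n + 1)).coeff (j + 1)
      = n * (ascPochhammer R n).coeff (j + 1) + (ascPochhammer R n).coeff j := by
  rw [ascPochhammer_succ_right, mul_add, coeff_add, coeff_mul_X, coeff_mul_natCast, add_comm,
    Nat.cast_comm]

theorem ascPochhammer_eval_eq_prod_range [CommSemiring R] (n : ℕ) (a : R) :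
    (ascPochhammer R n).eval a = ∏ j ∈ range n, (a + j) := by
  induction n with
  | zero => simp
  | succ n ih => rw [ascPochhammer_succ_eval, ih, prod_range_succ]

end Pochhammer

theorem cast_stirlingFirst (m j : ℕ) :
    (stirlingFirst m j : ℝ) = (ascPochhammer ℝ m).coeff j := by
  rw [stirlingFirst, ← ascPochhammer_map (Nat.castRingHom ℝ), coeff_map, eq_natCast]

theorem Real.Gamma_add_nat_eq_mul_ascPochhammer {x : ℝ} (hx : 0 < x) (n : ℕ) :
    Real.Gamma (x + n) = Real.Gamma x * (ascPochhammer ℝ n).eval x := by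
  induction n with
  | zero => simp
  | succ n ih =>
    rw [Nat.cast_succ, ← add_assoc, Real.Gamma_add_one (by positivity), ih,
      ascPochhammer_succ_eval]
    ring

-- Euler's limit formula gives `(a)_n / (b)_n ~ n ^ (a - b) Γ(b) / Γ(a)`.
theorem tendsto_ascPochhammer_div_ascPochhammer {a b : ℝ} (ha : 0 < a) (hab : a < b) :
    Tendsto (fun n => (ascPochhammer ℝ n).eval a / (ascPochhammer ℝ n).eval b)
      atTop (𝓝 0) := by
  have hb : 0 < b := ha.trans hab
  rw [← tendsto_add_atTop_iff_nat 1]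
  have hratio : ∀ n : ℕ, n ≠ 0 →
      (ascPochhammer ℝ (n + 1)).eval a / (ascPochhammer ℝ (n + 1)).eval b
      = (n : ℝ) ^ (-(b - a)) * (Real.GammaSeq b n / Real.GammaSeq a n) := by
    intro n hn
    have hn' : (0 : ℝ) < n := by positivity
    have hpa := ascPochhammer_pos (n + 1) a ha
    have hpb := ascPochhammer_pos (n + 1) b hb
    rw [ascPochhammer_eval_eq_prod_range] at hpa hpb ⊢
    rw [ascPochhammer_eval_eq_prod_range, Real.GammaSeq, Real.GammaSeq, Real.rpow_neg hn'.le,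
      Real.rpow_sub hn']
    field_simp
  have hlim :
      Tendsto (fun n : ℕ => (n : ℝ) ^ (-(b - a)) * (Real.GammaSeq b n / Real.GammaSeq a n))
      atTop (𝓝 (0 * (Real.Gamma b / Real.Gamma a))) :=
    ((tendsto_rpow_neg_atTop (by linarith)).comp tendsto_natCast_atTop_atTop).mul
      ((Real.GammaSeq_tendsto_Gamma b).div (Real.GammaSeq_tendsto_Gamma a)
        (Real.Gamma_pos_of_pos ha).ne')
  rw [zero_mul] at hlim
  exact hlim.congr' (eventually_ne_atTop 0 |>.mono fun n hn => (hratio n hn).symm)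

/-- `ascPochhammerTruncEval K N s / (s)_N` is `P[M_{K+1} > N]` for a GEM(0,s) sample: the
degree-`≤ K` part of `(X)_N` counts the permutations of `N` elements with at most `K` cycles. -/
def ascPochhammerTruncEval (K N : ℕ) (s : ℝ) : ℝ :=
  ∑ j ∈ range (K + 1), (ascPochhammer ℝ N).coeff j * s ^ j

section TruncEval

variable {s : ℝ} (K N : ℕ)

theorem ascPochhammerTruncEval_nonneg (hs : 0 ≤ s) : 0 ≤ ascPochhammerTruncEval K N s :=
  sum_nonneg fun j _ => mul_nonneg (ascPochhammer_coeff_nonneg N j) (pow_nonneg hs j)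

theorem ascPochhammerTruncEval_of_le (h : N ≤ K) :
    ascPochhammerTruncEval K N s = (ascPochhammer ℝ N).eval s :=
  (eval_eq_sum_range' (by rw [ascPochhammer_natDegree]; omega) s).symm

theorem ascPochhammerTruncEval_le_eval (hs : 0 ≤ s) :
    ascPochhammerTruncEval K N s ≤ (ascPochhammer ℝ N).eval s := by
  rw [← ascPochhammerTruncEval_of_le (max K N) N (le_max_right K N)]
  exact sum_le_sum_of_subset_of_nonneg (range_subset_range.2 (by omega))
    fun j _ _ => mul_nonneg (ascPochhammer_coeff_nonneg N j) (pow_nonneg hs j)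

theorem ascPochhammerTruncEval_mul_le {c : ℝ} (hc : 1 ≤ c) (hs : 0 ≤ s) :
    ascPochhammerTruncEval K N (c * s) ≤ c ^ K * ascPochhammerTruncEval K N s := by
  rw [ascPochhammerTruncEval, ascPochhammerTruncEval, mul_sum]
  refine sum_le_sum fun j hj => ?_
  have hcj : c ^ j ≤ c ^ K := pow_le_pow_right₀ hc (Nat.lt_succ_iff.1 (mem_range.1 hj))
  have hterm := mul_nonneg (ascPochhammer_coeff_nonneg N j) (pow_nonneg hs j)
  rw [mul_pow, mul_left_comm]
  exact mul_le_mul_of_nonneg_right hcj hterm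

theorem ascPochhammerTruncEval_succ :
    ascPochhammerTruncEval K (N + 1) s
      = (s + N) * ascPochhammerTruncEval K N s - (ascPochhammer ℝ N).coeff K * s ^ (K + 1) := by
  have hshift : ascPochhammerTruncEval K (N + 1) s
      = N * ∑ j ∈ range K, (ascPochhammer ℝ N).coeff (j + 1) * s ^ (j + 1)
        + s * ∑ j ∈ range K, (ascPochhammer ℝ N).coeff j * s ^ j := by
    simp only [ascPochhammerTruncEval, sum_range_succ' _ K, ascPochhammer_succ_coeff_zero,
      ascPochhammer_succ_coeff_succ, mul_sum]
    simp only [zero_mul, add_zero, ← sum_add_distrib]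
    exact sum_congr rfl fun j _ => by ring
  have hlow := sum_range_succ' (fun j => (ascPochhammer ℝ N).coeff j * s ^ j) K
  have hhigh := sum_range_succ (fun j => (ascPochhammer ℝ N).coeff j * s ^ j) K
  have hconst : (N : ℝ) * (ascPochhammer ℝ N).coeff 0 = 0 := by
    cases N <;> simp [ascPochhammer_succ_coeff_zero]
  rw [hshift, ascPochhammerTruncEval]
  linear_combination (-(N : ℝ)) * hlow - s * hhigh - hconst

end TruncEval

theorem sum_range_coeff_div_ascPochhammer {s : ℝ} (hs : 0 < s) (K M : ℕ) :
    ∑ m ∈ range M, (ascPochhammer ℝ (m + K)).coeff K * s ^ (K + 1)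
        / (ascPochhammer ℝ (m + K + 1)).eval s
      = 1 - ascPochhammerTruncEval K (M + K) s / (ascPochhammer ℝ (M + K)).eval s := by
  induction M with
  | zero =>
    rw [sum_range_zero, zero_add, ascPochhammerTruncEval_of_le K K le_rfl,
      div_self (ascPochhammer_pos K s hs).ne', sub_self]
  | succ M ih =>
    have hP := ascPochhammer_pos (M + K) s hs
    have hsMK : 0 < s + (M + K : ℕ) := by positivity
    rw [sum_range_succ, ih, Nat.add_right_comm M 1 K, ascPochhammerTruncEval_succ,
      ascPochhammer_succ_eval]
    field_simp
    ring

theorem tendsto_ascPochhammerTruncEval_div {s : ℝ} (hs : 0 < s) (K : ℕ) :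
    Tendsto (fun N => ascPochhammerTruncEval K N s / (ascPochhammer ℝ N).eval s)
      atTop (𝓝 0) := by
  have hbound : ∀ N, ascPochhammerTruncEval K N s / (ascPochhammer ℝ N).eval s
      ≤ 2 ^ K * ((ascPochhammer ℝ N).eval (s / 2) / (ascPochhammer ℝ N).eval s) := by
    intro N
    rw [← mul_div_assoc]
    refine div_le_div_of_nonneg_right ?_ (ascPochhammer_pos N s hs).le
    calc ascPochhammerTruncEval K N s = ascPochhammerTruncEval K N (2 * (s / 2)) := by ring_nf
      _ ≤ 2 ^ K * ascPochhammerTruncEval K N (s / 2) :=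
        ascPochhammerTruncEval_mul_le K N one_le_two (by positivity)
      _ ≤ 2 ^ K * (ascPochhammer ℝ N).eval (s / 2) := by
        gcongr; exact ascPochhammerTruncEval_le_eval K N (by positivity)
  have hlim := (tendsto_ascPochhammer_div_ascPochhammer (half_pos hs) (half_lt_self hs)).const_mul
    ((2 : ℝ) ^ K)
  rw [mul_zero] at hlim
  exact squeeze_zero (fun N => div_nonneg (ascPochhammerTruncEval_nonneg K N hs.le)
    (ascPochhammer_pos N s hs).le) hbound hlim

theorem hasSum_coeff_div_ascPochhammer {s : ℝ} (hs : 0 < s) (K : ℕ) :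
    HasSum (fun m => (ascPochhammer ℝ (m + K)).coeff K * s ^ (K + 1)
      / (ascPochhammer ℝ (m + K + 1)).eval s) 1 := by
  refine (hasSum_iff_tendsto_nat_of_nonneg (fun m => ?_) 1).2 ?_
  · have := ascPochhammer_pos (m + K + 1) s hs
    have := ascPochhammer_coeff_nonneg (R := ℝ) (m + K) K
    positivity
  simp only [sum_range_coeff_div_ascPochhammer hs]
  simpa using ((tendsto_ascPochhammerTruncEval_div hs K).comp (tendsto_add_atTop_nat K)).const_sub 1

theorem stirlingTerm_add_succ {θ r : ℝ} (hθ : 0 < θ) (hs : 0 < θ + r) (K m : ℕ) :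
    stirlingTerm θ r (K + 1) (m + (K + 1))
      = θ ^ (K + 1) * Real.Gamma θ / (Real.Gamma (θ + r) * (θ + r) ^ (K + 1))
        * ((ascPochhammer ℝ (m + K)).coeff K * (θ + r) ^ (K + 1)
          / (ascPochhammer ℝ (m + K + 1)).eval (θ + r)) := by
  have hΓθ : Real.Gamma ((m + K + 1 : ℕ) + θ)
      = Real.Gamma θ * (ascPochhammer ℝ (m + K + 1)).eval θ := by
    rw [add_comm, Real.Gamma_add_nat_eq_mul_ascPochhammer hθ]
  have hΓs : Real.Gamma ((m + K + 1 : ℕ) + θ + r)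
      = Real.Gamma (θ + r) * (ascPochhammer ℝ (m + K + 1)).eval (θ + r) := by
    rw [add_assoc, add_comm, Real.Gamma_add_nat_eq_mul_ascPochhammer hs]
  have := ascPochhammer_pos (m + K + 1) θ hθ
  have := ascPochhammer_pos (m + K + 1) (θ + r) hs
  have := Real.Gamma_pos_of_pos hθ
  have := Real.Gamma_pos_of_pos hs
  rw [stirlingTerm, ← add_assoc, hΓθ, hΓs, Nat.add_sub_cancel, Nat.add_sub_cancel,
    cast_stirlingFirst]
  field_simp

theorem stmt_16 (θ : ℝ) (hθ : 0 < θ) (k : ℕ) (hk : 1 ≤ k) (r : ℝ) (hr : -θ < r) :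
    Summable (fun m : ℕ => stirlingTerm θ r k (m + k))
      ∧ ∑' m : ℕ, stirlingTerm θ r k (m + k)
        = θ ^ (k - 1) * Real.Gamma (θ + 1) / ((θ + r) ^ k * Real.Gamma (θ + r)) := by
  obtain ⟨K, rfl⟩ := Nat.exists_eq_add_of_le' hk
  have hs : 0 < θ + r := by linarith
  have hsum := ((hasSum_coeff_div_ascPochhammer hs K).mul_left
    (θ ^ (K + 1) * Real.Gamma θ / (Real.Gamma (θ + r) * (θ + r) ^ (K + 1)))).congr_fun
      (stirlingTerm_add_succ hθ hs K)
  refine ⟨hsum.summable, hsum.tsum_eq.trans ?_⟩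
  rw [Real.Gamma_add_one hθ.ne', Nat.add_sub_cancel]
  ring
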